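/- Let X₀ ∈ ℝ^{n×n} be symmetric of rank r, let U ∈ ℝ^{n×r} have orthonormal columns spanning the column space of X₀, and set Π_{U⊥} = I − UUᵀ. Let Δ ∈ ℝ^{n×n} be symmetric with spectral norm ‖Δ‖ < σ_r(X₀) (σ_r(X₀) the r-th largest singular value of X₀), so that Uᵀ(X₀+Δ)U is invertible. Define the tangent-space projection Π_T(Δ) = Δ − Π_{U⊥} Δ Π_{U⊥} and the remainder R = Π_{U⊥} Δ U (Uᵀ(X₀+Δ)U)^{−1} Uᵀ Δᵀ Π_{U⊥}. Then ‖R‖_F ≤ ‖Π_T(Δ)‖_F² / (σ_r(X₀) − ‖Δ‖). -/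

import Mathlib

open Matrix BigOperators

/-- Frobenius norm of a real matrix. -/
noncomputable def frobNorm {a b : ℕ} (X : Matrix (Fin a) (Fin b) ℝ) : ℝ :=
  Real.sqrt (∑ i, ∑ j, (X i j) ^ 2)

/-- Spectral (operator) norm of a real matrix. -/
noncomputable def specNorm {a b : ℕ} (X : Matrix (Fin a) (Fin b) ℝ) : ℝ :=
  ‖LinearMap.toContinuousLinearMap (Matrix.toEuclideanLin X)‖

/-- `singVal X k`: the `k`-th largest singular value of `X` (1-indexed),
i.e. the `k`-th largest square root of an eigenvalue of `Xᴴ X`. -/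
noncomputable def singVal {a b : ℕ} (X : Matrix (Fin a) (Fin b) ℝ) (k : ℕ) : ℝ :=
  ((((Finset.univ : Finset (Fin b)).val.map
      (fun i => Real.sqrt ((show (Xᵀ * X).IsHermitian by simpa using Matrix.isHermitian_conjTranspose_mul_self X).eigenvalues i))).sort
      (· ≤ ·)).getD (b - k) 0)

/-- The positive semidefinite square root of a positive semidefinite matrix
(junk value `0` otherwise). -/
noncomputable def matSqrt {d : ℕ} (A : Matrix (Fin d) (Fin d) ℝ) : Matrix (Fin d) (Fin d) ℝ :=
  open scoped Classical in
  if h : A.PosSemidef then (h.1.eigenvectorUnitary.1 * diagonal ((↑) ∘ (Real.sqrt ·) ∘ h.1.eigenvalues) *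
      (star h.1.eigenvectorUnitary : Matrix (Fin d) (Fin d) ℝ)) else 0

/-- `Πₒ(X) = X (XᵀX)^{-1/2}`, the projection onto the nearest orthonormal-column matrix. -/
noncomputable def Pio {a b : ℕ} (X : Matrix (Fin a) (Fin b) ℝ) : Matrix (Fin a) (Fin b) ℝ :=
  X * (matSqrt (Xᵀ * X))⁻¹

open WithLp Finset

/-!
Write `Q = 1 - U Uᵀ`, `A = Q Δ U` and `M = Uᵀ (X₀ + Δ) U`. Since `Q U = 0` we have
`A = Q Π_T(Δ) U`, so `‖A‖_F ≤ ‖Π_T(Δ)‖_F`, and the remainder is `A M⁻¹ Aᵀ`, so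
`‖R‖_F ≤ ‖A‖_F² ‖M⁻¹‖`. The nonzero eigenvalues of `X₀ᵀ X₀` are at least `σ_r(X₀)²`, so `X₀` is
bounded below by `σ_r(X₀)` on its row space, which for symmetric `X₀` is the column space of `U`.
Hence `Uᵀ X₀ U` is bounded below by `σ_r(X₀)` and `M` by `σ_r(X₀) - ‖Δ‖ > 0`, which gives
invertibility and `‖M⁻¹‖ ≤ (σ_r(X₀) - ‖Δ‖)⁻¹`.
-/

theorem norm_toLp_sq {n : Type*} [Fintype n] (x : n → ℝ) : ‖toLp 2 x‖ ^ 2 = x ⬝ᵥ x := by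
  rw [EuclideanSpace.real_norm_sq_eq]
  simp [dotProduct, sq]

theorem norm_toLp_mulVec_sq {m n : Type*} [Fintype m] [Fintype n] (A : Matrix m n ℝ)
    (x : n → ℝ) : ‖toLp 2 (A *ᵥ x)‖ ^ 2 = x ⬝ᵥ ((Aᵀ * A) *ᵥ x) := by
  rw [norm_toLp_sq, ← mulVec_mulVec, dotProduct_mulVec x Aᵀ, vecMul_transpose]

theorem norm_toLp_mulVec_of_transpose_mul_self_eq_one {m n : Type*} [Fintype m] [Fintype n]
    [DecidableEq n] {U : Matrix m n ℝ} (hU : Uᵀ * U = 1) (v : n → ℝ) :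
    ‖toLp 2 (U *ᵥ v)‖ = ‖toLp 2 v‖ := by
  rw [← sq_eq_sq₀ (norm_nonneg _) (norm_nonneg _), norm_toLp_mulVec_sq, hU, one_mulVec,
    norm_toLp_sq]

section SpecNorm

open scoped Matrix.Norms.L2Operator

theorem specNorm_eq_norm {a b : ℕ} (X : Matrix (Fin a) (Fin b) ℝ) : specNorm X = ‖X‖ := rfl

theorem specNorm_nonneg {a b : ℕ} (X : Matrix (Fin a) (Fin b) ℝ) : 0 ≤ specNorm X :=
  norm_nonneg X

theorem norm_toLp_mulVec_le {a b : ℕ} (X : Matrix (Fin a) (Fin b) ℝ) (x : Fin b → ℝ) :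
    ‖toLp 2 (X *ᵥ x)‖ ≤ specNorm X * ‖toLp 2 x‖ :=
  X.l2_opNorm_mulVec (toLp 2 x)

theorem specNorm_le_of_forall_norm_toLp_mulVec_le {a b : ℕ} {X : Matrix (Fin a) (Fin b) ℝ}
    {c : ℝ} (hc : 0 ≤ c) (h : ∀ x, ‖toLp 2 (X *ᵥ x)‖ ≤ c * ‖toLp 2 x‖) : specNorm X ≤ c :=
  ContinuousLinearMap.opNorm_le_bound _ hc fun x => h x.ofLp

theorem specNorm_mul_le {a b c : ℕ} (X : Matrix (Fin a) (Fin b) ℝ)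
    (Y : Matrix (Fin b) (Fin c) ℝ) : specNorm (X * Y) ≤ specNorm X * specNorm Y :=
  X.l2_opNorm_mul Y

theorem specNorm_transpose {a b : ℕ} (X : Matrix (Fin a) (Fin b) ℝ) :
    specNorm Xᵀ = specNorm X := by
  simpa [specNorm_eq_norm] using X.l2_opNorm_conjTranspose

theorem specNorm_le_one_of_transpose_mul_self_eq_one {a b : ℕ} {U : Matrix (Fin a) (Fin b) ℝ}
    (hU : Uᵀ * U = 1) : specNorm U ≤ 1 :=
  specNorm_le_of_forall_norm_toLp_mulVec_le zero_le_one fun v => by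
    rw [norm_toLp_mulVec_of_transpose_mul_self_eq_one hU, one_mul]

theorem specNorm_le_one_of_transpose_mul_self_eq_self {d : ℕ} {Q : Matrix (Fin d) (Fin d) ℝ}
    (hQ : Qᵀ * Q = Q) : specNorm Q ≤ 1 := by
  have h : specNorm Q = specNorm Q * specNorm Q := by
    simpa [specNorm_eq_norm, hQ] using Q.l2_opNorm_conjTranspose_mul_self
  nlinarith [specNorm_nonneg Q]

theorem specNorm_transpose_mul_mul_le {a b : ℕ} {U : Matrix (Fin a) (Fin b) ℝ}
    (hU : Uᵀ * U = 1) (Δ : Matrix (Fin a) (Fin a) ℝ) : specNorm (Uᵀ * Δ * U) ≤ specNorm Δ := by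
  have hU' := specNorm_le_one_of_transpose_mul_self_eq_one hU
  have hUt : specNorm Uᵀ ≤ 1 := specNorm_transpose U ▸ hU'
  calc specNorm (Uᵀ * Δ * U) ≤ specNorm Uᵀ * specNorm Δ * specNorm U :=
        (specNorm_mul_le _ _).trans
          (mul_le_mul_of_nonneg_right (specNorm_mul_le _ _) (specNorm_nonneg _))
    _ ≤ 1 * specNorm Δ * 1 :=
        mul_le_mul (mul_le_mul_of_nonneg_right hUt (specNorm_nonneg _)) hU' (specNorm_nonneg _)
          (by simpa using specNorm_nonneg Δ)
    _ = specNorm Δ := by ring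

end SpecNorm

section FrobNorm

attribute [local instance] Matrix.frobeniusNormedAddCommGroup

theorem frobNorm_eq_norm {a b : ℕ} (X : Matrix (Fin a) (Fin b) ℝ) : frobNorm X = ‖X‖ := by
  rw [frobenius_norm_def, frobNorm, Real.sqrt_eq_rpow]
  simp [Real.norm_eq_abs, sq_abs]

theorem frobNorm_nonneg {a b : ℕ} (X : Matrix (Fin a) (Fin b) ℝ) : 0 ≤ frobNorm X :=
  Real.sqrt_nonneg _

theorem frobNorm_transpose {a b : ℕ} (X : Matrix (Fin a) (Fin b) ℝ) :
    frobNorm Xᵀ = frobNorm X := by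
  simp only [frobNorm_eq_norm, frobenius_norm_transpose]

theorem frobNorm_mul_le {a b c : ℕ} (X : Matrix (Fin a) (Fin b) ℝ)
    (Y : Matrix (Fin b) (Fin c) ℝ) : frobNorm (X * Y) ≤ frobNorm X * frobNorm Y := by
  simpa [frobNorm_eq_norm] using frobenius_norm_mul X Y

end FrobNorm

theorem frobNorm_sq_eq_sum_norm_toLp_sq {a b : ℕ} (X : Matrix (Fin a) (Fin b) ℝ) :
    frobNorm X ^ 2 = ∑ j, ‖toLp 2 (Xᵀ j)‖ ^ 2 := by
  rw [frobNorm, Real.sq_sqrt (by positivity), sum_comm]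
  simp only [norm_toLp_sq, dotProduct, transpose_apply]
  simp only [sq]

theorem frobNorm_mul_le_specNorm_mul {a b c : ℕ} (X : Matrix (Fin a) (Fin b) ℝ)
    (Y : Matrix (Fin b) (Fin c) ℝ) : frobNorm (X * Y) ≤ specNorm X * frobNorm Y := by
  refine (pow_le_pow_iff_left₀ (frobNorm_nonneg _)
    (mul_nonneg (specNorm_nonneg _) (frobNorm_nonneg _)) two_ne_zero).1 ?_
  rw [mul_pow, frobNorm_sq_eq_sum_norm_toLp_sq, frobNorm_sq_eq_sum_norm_toLp_sq, mul_sum]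
  refine sum_le_sum fun j _ => ?_
  have hcol : (X * Y)ᵀ j = X *ᵥ Yᵀ j := by
    ext i; simp [mul_apply, mulVec, dotProduct]
  rw [hcol, ← mul_pow]
  exact pow_le_pow_left₀ (norm_nonneg _) (norm_toLp_mulVec_le X _) 2

theorem frobNorm_mul_le_mul_specNorm {a b c : ℕ} (X : Matrix (Fin a) (Fin b) ℝ)
    (Y : Matrix (Fin b) (Fin c) ℝ) : frobNorm (X * Y) ≤ frobNorm X * specNorm Y := by
  rw [← frobNorm_transpose, transpose_mul, mul_comm, ← frobNorm_transpose X,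
    ← specNorm_transpose Y]
  exact frobNorm_mul_le_specNorm_mul _ _

theorem Matrix.isHermitian_transpose_mul_self {m n : Type*} [Fintype m] (A : Matrix m n ℝ) :
    (Aᵀ * A).IsHermitian := by
  simpa using A.isHermitian_conjTranspose_mul_self

theorem transpose_mulVec_apply_eq_zero_of_transpose_mul_self_eq_diagonal {m n : Type*}
    [Fintype m] [DecidableEq n] {W : Matrix m n ℝ} {d : n → ℝ} (hW : Wᵀ * W = diagonal d)
    {i : n} (hi : d i = 0) (y : m → ℝ) : (Wᵀ *ᵥ y) i = 0 := by
  have hcol : ∀ k, W k i = 0 := by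
    have hsum : ∑ k, W k i * W k i = 0 := by
      simpa [mul_apply, hi] using congrFun (congrFun hW i) i
    intro k
    exact mul_self_eq_zero.1 <|
      (sum_eq_zero_iff_of_nonneg fun k _ => mul_self_nonneg (W k i)).1 hsum k (mem_univ k)
  simp [mulVec, dotProduct, hcol]

theorem mul_norm_le_norm_mulVec_of_transpose_mul_self_eq_diagonal {m n : Type*} [Fintype m]
    [Fintype n] [DecidableEq n] {W : Matrix m n ℝ} {d : n → ℝ} (hW : Wᵀ * W = diagonal d)
    {σ : ℝ} (hσ : 0 ≤ σ) (hd : ∀ i, d i ≠ 0 → σ ^ 2 ≤ d i) (y : m → ℝ) :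
    σ * ‖toLp 2 (Wᵀ *ᵥ y)‖ ≤ ‖toLp 2 (W *ᵥ (Wᵀ *ᵥ y))‖ := by
  set c := Wᵀ *ᵥ y
  refine (pow_le_pow_iff_left₀ (by positivity) (norm_nonneg _) two_ne_zero).1 ?_
  rw [mul_pow, norm_toLp_mulVec_sq W c, hW, norm_toLp_sq, dotProduct, dotProduct, mul_sum]
  refine sum_le_sum fun i _ => ?_
  by_cases hi : d i = 0
  · simp [c, transpose_mulVec_apply_eq_zero_of_transpose_mul_self_eq_diagonal hW hi]
  · rw [mulVec_diagonal]
    nlinarith [hd i hi, mul_self_nonneg (c i)]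

/-- If `V` is an orthogonal matrix diagonalizing `Xᵀ X`, then `W = X V` has orthogonal columns
and `Xᵀ y = V (Wᵀ y)`, which reduces the bound to the diagonal case. -/
theorem mul_norm_le_norm_mulVec_transpose_mulVec {m n : Type*} [Fintype m] [Fintype n]
    [DecidableEq n] (X : Matrix m n ℝ) {σ : ℝ} (hσ : 0 ≤ σ)
    (hX : ∀ i, X.isHermitian_transpose_mul_self.eigenvalues i ≠ 0 →
      σ ^ 2 ≤ X.isHermitian_transpose_mul_self.eigenvalues i) (y : m → ℝ) :
    σ * ‖toLp 2 (Xᵀ *ᵥ y)‖ ≤ ‖toLp 2 (X *ᵥ (Xᵀ *ᵥ y))‖ := by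
  set V : Matrix n n ℝ := (X.isHermitian_transpose_mul_self.eigenvectorUnitary : Matrix n n ℝ)
  have hstar : star V = Vᵀ := conjTranspose_eq_transpose_of_trivial V
  have hVV : Vᵀ * V = 1 := hstar ▸ Unitary.coe_star_mul_self _
  have hVV' : V * Vᵀ = 1 := hstar ▸ Unitary.coe_mul_star_self _
  have hW : (X * V)ᵀ * (X * V) = diagonal X.isHermitian_transpose_mul_self.eigenvalues := by
    have := X.isHermitian_transpose_mul_self.conjStarAlgAut_star_eigenvectorUnitary
    rw [Unitary.conjStarAlgAut_star_apply] at this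
    rw [transpose_mul, ← hstar]
    simpa [Matrix.mul_assoc] using this
  have hXt : Xᵀ *ᵥ y = V *ᵥ ((X * V)ᵀ *ᵥ y) := by
    rw [mulVec_mulVec, transpose_mul, ← Matrix.mul_assoc, hVV', Matrix.one_mul]
  rw [hXt, norm_toLp_mulVec_of_transpose_mul_self_eq_one hVV, mulVec_mulVec]
  exact mul_norm_le_norm_mulVec_of_transpose_mul_self_eq_diagonal hW hσ hX y

theorem List.Pairwise.getD_le_of_lt_countP {l : List ℝ} (hl : l.Pairwise (· ≤ ·)) {k : ℕ}
    {p : ℝ} (hk : k < l.countP (· ≤ p)) : l.getD k 0 ≤ p := by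
  have hlen : k < l.length := hk.trans_le (List.countP_le_length)
  rw [List.getD_eq_getElem l 0 hlen]
  by_contra! hp
  have hdrop : (l.drop k).countP (· ≤ p) = 0 := by
    have hsorted := hl.drop (i := k)
    rw [List.drop_eq_getElem_cons hlen, List.pairwise_cons] at hsorted
    rw [List.drop_eq_getElem_cons hlen, List.countP_eq_zero]
    rintro x hx
    rcases List.mem_cons.1 hx with rfl | hx
    · simpa using hp
    · simpa using hp.trans_le (hsorted.1 x hx)
  have htake : (l.take k).countP (· ≤ p) ≤ k :=
    List.countP_le_length.trans (List.length_take_le k l)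
  rw [← List.take_append_drop k l, List.countP_append, hdrop] at hk
  omega

/-- `singVal X r` is the entry at index `b - r` of the ascending list of the `√λⱼ`; the `b - r`
zero eigenvalues together with `i` give `b - r + 1` entries that are at most `√λᵢ`. -/
theorem singVal_le_sqrt_eigenvalue {a b r : ℕ} {X : Matrix (Fin a) (Fin b) ℝ}
    (hrank : X.rank = r) {i : Fin b} (hi : X.isHermitian_transpose_mul_self.eigenvalues i ≠ 0) :
    singVal X r ≤ √(X.isHermitian_transpose_mul_self.eigenvalues i) := by
  classical
  set eig := X.isHermitian_transpose_mul_self.eigenvalues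
  have hnonzero : #{j | eig j ≠ 0} = r := by
    rw [← hrank, ← rank_transpose_mul_self,
      X.isHermitian_transpose_mul_self.rank_eq_card_non_zero_eigs, Fintype.card_subtype]
  have hzero : #{j | eig j = 0} + r = b := by
    simpa [hnonzero] using card_filter_add_card_filter_not (s := univ) (fun j => eig j = 0)
  have hle : insert i (univ.filter fun j => eig j = 0) ⊆
      univ.filter fun j => √(eig j) ≤ √(eig i) := by
    intro j hj
    rcases Finset.mem_insert.1 hj with rfl | hj
    · simp
    · simp_all
  have hcount := Finset.card_le_card hle
  rw [Finset.card_insert_of_notMem (by simpa using hi)] at hcount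
  refine (Multiset.pairwise_sort _ _).getD_le_of_lt_countP ?_
  rw [← Multiset.coe_countP, Multiset.sort_eq, Multiset.countP_map]
  show b - r < #{j | √(eig j) ≤ √(eig i)}
  omega

/-- `U v` lies in the column space of `X`, which is its row space since `X` is symmetric, and
`X (U v)` lies in the range of `U`, on which `Uᵀ` is an isometry. -/
theorem mul_norm_le_norm_transpose_mul_mul_mulVec {m r : Type*} [Fintype m] [DecidableEq m]
    [Fintype r] [DecidableEq r] {X : Matrix m m ℝ} (hX : Xᵀ = X) {U : Matrix m r ℝ}
    (hU : Uᵀ * U = 1) (hrange : LinearMap.range U.mulVecLin = LinearMap.range X.mulVecLin)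
    {σ : ℝ} (hσ : 0 ≤ σ)
    (hσX : ∀ i, X.isHermitian_transpose_mul_self.eigenvalues i ≠ 0 →
      σ ^ 2 ≤ X.isHermitian_transpose_mul_self.eigenvalues i) (v : r → ℝ) :
    σ * ‖toLp 2 v‖ ≤ ‖toLp 2 ((Uᵀ * X * U) *ᵥ v)‖ := by
  obtain ⟨y, hy⟩ : U *ᵥ v ∈ LinearMap.range X.mulVecLin := hrange ▸ ⟨v, rfl⟩
  obtain ⟨w, hw⟩ : X *ᵥ (U *ᵥ v) ∈ LinearMap.range U.mulVecLin := hrange ▸ ⟨U *ᵥ v, rfl⟩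
  simp only [mulVecLin_apply] at hy hw
  have hcompress : (Uᵀ * X * U) *ᵥ v = w := by
    rw [← mulVec_mulVec, ← mulVec_mulVec, ← hw, mulVec_mulVec, hU, one_mulVec]
  have hlower := mul_norm_le_norm_mulVec_transpose_mulVec X hσ hσX y
  rw [hX, hy, ← hw, norm_toLp_mulVec_of_transpose_mul_self_eq_one hU,
    norm_toLp_mulVec_of_transpose_mul_self_eq_one hU] at hlower
  rwa [hcompress]

theorem sub_specNorm_mul_norm_le_norm_add_mulVec {a b : ℕ} {S : Matrix (Fin a) (Fin b) ℝ}
    {σ : ℝ} (hS : ∀ v, σ * ‖toLp 2 v‖ ≤ ‖toLp 2 (S *ᵥ v)‖) (E : Matrix (Fin a) (Fin b) ℝ)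
    (v : Fin b → ℝ) : (σ - specNorm E) * ‖toLp 2 v‖ ≤ ‖toLp 2 ((S + E) *ᵥ v)‖ := by
  have hsub := norm_sub_le (toLp 2 ((S + E) *ᵥ v)) (toLp 2 (E *ᵥ v))
  rw [← WithLp.toLp_sub, add_mulVec, add_sub_cancel_right] at hsub
  rw [add_mulVec]
  linarith [hS v, norm_toLp_mulVec_le E v]

theorem isUnit_of_mul_norm_le_norm_mulVec {d : ℕ} {M : Matrix (Fin d) (Fin d) ℝ} {s : ℝ}
    (hs : 0 < s) (hM : ∀ v, s * ‖toLp 2 v‖ ≤ ‖toLp 2 (M *ᵥ v)‖) : IsUnit M := by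
  rw [isUnit_iff_isUnit_det, isUnit_iff_ne_zero]
  intro hdet
  obtain ⟨v, hv, hMv⟩ := exists_mulVec_eq_zero_iff.2 hdet
  have h := hM v
  rw [hMv, WithLp.toLp_zero, norm_zero] at h
  have hv0 : ‖toLp 2 v‖ = 0 :=
    le_antisymm (by nlinarith [norm_nonneg (toLp 2 v)]) (norm_nonneg _)
  exact hv (by simpa using hv0)

theorem specNorm_nonsing_inv_le_of_mul_norm_le_norm_mulVec {d : ℕ}
    {M : Matrix (Fin d) (Fin d) ℝ} {s : ℝ} (hs : 0 < s)
    (hM : ∀ v, s * ‖toLp 2 v‖ ≤ ‖toLp 2 (M *ᵥ v)‖) : specNorm M⁻¹ ≤ s⁻¹ := by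
  have hdet := (isUnit_iff_isUnit_det M).1 (isUnit_of_mul_norm_le_norm_mulVec hs hM)
  refine specNorm_le_of_forall_norm_toLp_mulVec_le (inv_nonneg.2 hs.le) fun w => ?_
  have h := hM (M⁻¹ *ᵥ w)
  rw [mulVec_mulVec, mul_nonsing_inv M hdet, one_mulVec] at h
  rw [inv_mul_eq_div, le_div_iff₀ hs, mul_comm]
  exact h

theorem frobNorm_mul_mul_transpose_le {a b : ℕ} (A : Matrix (Fin a) (Fin b) ℝ)
    (B : Matrix (Fin b) (Fin b) ℝ) : frobNorm (A * B * Aᵀ) ≤ frobNorm A ^ 2 * specNorm B :=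
  calc frobNorm (A * B * Aᵀ) ≤ frobNorm (A * B) * frobNorm Aᵀ := frobNorm_mul_le _ _
    _ ≤ frobNorm A * specNorm B * frobNorm A := by
        rw [frobNorm_transpose]
        exact mul_le_mul_of_nonneg_right (frobNorm_mul_le_mul_specNorm A B) (frobNorm_nonneg A)
    _ = frobNorm A ^ 2 * specNorm B := by ring

theorem frobNorm_orthProj_mul_mul_le {n r : ℕ} {U : Matrix (Fin n) (Fin r) ℝ} (hU : Uᵀ * U = 1)
    (Δ : Matrix (Fin n) (Fin n) ℝ) :
    frobNorm ((1 - U * Uᵀ) * Δ * U) ≤ frobNorm (Δ - (1 - U * Uᵀ) * Δ * (1 - U * Uᵀ)) := by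
  set Q := 1 - U * Uᵀ
  have hQU : Q * U = 0 := by
    rw [Matrix.sub_mul, Matrix.one_mul, Matrix.mul_assoc, hU, Matrix.mul_one, sub_self]
  have hQ : Qᵀ * Q = Q := by
    have hsymm : Qᵀ = Q := by simp [Q, transpose_sub]
    rw [hsymm, Matrix.mul_sub, Matrix.mul_one, ← Matrix.mul_assoc, hQU, Matrix.zero_mul, sub_zero]
  clear_value Q
  have htangent : Q * Δ * U = Q * ((Δ - Q * Δ * Q) * U) := by
    rw [Matrix.sub_mul, Matrix.mul_sub, Matrix.mul_assoc (Q * Δ) Q U, hQU, Matrix.mul_zero,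
      Matrix.mul_zero, sub_zero, Matrix.mul_assoc]
  calc frobNorm (Q * Δ * U)
      ≤ specNorm Q * (frobNorm (Δ - Q * Δ * Q) * specNorm U) := by
        rw [htangent]
        exact (frobNorm_mul_le_specNorm_mul _ _).trans (mul_le_mul_of_nonneg_left
          (frobNorm_mul_le_mul_specNorm _ _) (specNorm_nonneg Q))
    _ ≤ 1 * (frobNorm (Δ - Q * Δ * Q) * 1) :=
        mul_le_mul (specNorm_le_one_of_transpose_mul_self_eq_self hQ)
          (mul_le_mul_of_nonneg_left (specNorm_le_one_of_transpose_mul_self_eq_one hU)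
            (frobNorm_nonneg _))
          (mul_nonneg (frobNorm_nonneg _) (specNorm_nonneg _)) zero_le_one
    _ = frobNorm (Δ - Q * Δ * Q) := by ring

theorem stmt12_general {n r : ℕ} (X₀ : Matrix (Fin n) (Fin n) ℝ) (hX₀symm : X₀ᵀ = X₀)
    (hrank : X₀.rank = r)
    (U : Matrix (Fin n) (Fin r) ℝ) (hUo : Uᵀ * U = 1)
    (hUspan : Submodule.span ℝ (Set.range fun k => Uᵀ k) =
      Submodule.span ℝ (Set.range fun j => X₀ᵀ j))
    (Δ : Matrix (Fin n) (Fin n) ℝ)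
    (hsmall : specNorm Δ < singVal X₀ r) :
    IsUnit (Uᵀ * (X₀ + Δ) * U) ∧
      frobNorm ((1 - U * Uᵀ) * Δ * U * (Uᵀ * (X₀ + Δ) * U)⁻¹ * Uᵀ * Δᵀ * (1 - U * Uᵀ)) ≤
        (frobNorm (Δ - (1 - U * Uᵀ) * Δ * (1 - U * Uᵀ))) ^ 2 /
          (singVal X₀ r - specNorm Δ) := by
  set σ := singVal X₀ r
  set M := Uᵀ * (X₀ + Δ) * U
  have hσ : 0 < σ := (specNorm_nonneg Δ).trans_lt hsmall
  have hgap : 0 < σ - specNorm Δ := sub_pos.2 hsmall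
  have hrange : LinearMap.range U.mulVecLin = LinearMap.range X₀.mulVecLin := by
    rw [range_mulVecLin, range_mulVecLin]
    exact hUspan
  have hM : ∀ v, (σ - specNorm Δ) * ‖toLp 2 v‖ ≤ ‖toLp 2 (M *ᵥ v)‖ := by
    intro v
    have hX₀ := mul_norm_le_norm_transpose_mul_mul_mulVec hX₀symm hUo hrange hσ.le
      (fun i hi => (Real.le_sqrt' hσ).1 (singVal_le_sqrt_eigenvalue hrank hi))
    have hM' := sub_specNorm_mul_norm_le_norm_add_mulVec hX₀ (Uᵀ * Δ * U) v
    rw [← Matrix.add_mul, ← Matrix.mul_add] at hM'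
    nlinarith [specNorm_transpose_mul_mul_le hUo Δ, norm_nonneg (toLp 2 v)]
  refine ⟨isUnit_of_mul_norm_le_norm_mulVec hgap hM, ?_⟩
  have hR : (1 - U * Uᵀ) * Δ * U * M⁻¹ * Uᵀ * Δᵀ * (1 - U * Uᵀ) =
      ((1 - U * Uᵀ) * Δ * U) * M⁻¹ * ((1 - U * Uᵀ) * Δ * U)ᵀ := by
    simp [transpose_mul, transpose_sub, Matrix.mul_assoc]
  rw [hR, div_eq_mul_inv]
  calc _ ≤ frobNorm ((1 - U * Uᵀ) * Δ * U) ^ 2 * specNorm M⁻¹ :=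
        frobNorm_mul_mul_transpose_le _ _
    _ ≤ _ :=
        mul_le_mul (pow_le_pow_left₀ (frobNorm_nonneg _) (frobNorm_orthProj_mul_mul_le hUo Δ) 2)
          (specNorm_nonsing_inv_le_of_mul_norm_le_norm_mulVec hgap hM) (specNorm_nonneg _)
          (by positivity)

/-- Bound on the remainder of the tangent-space projection for the
manifold of rank-`r` matrices. -/
theorem stmt12 {n r : ℕ} (X₀ : Matrix (Fin n) (Fin n) ℝ) (hX₀symm : X₀ᵀ = X₀)
    (hrank : X₀.rank = r)
    (U : Matrix (Fin n) (Fin r) ℝ) (hUo : Uᵀ * U = 1)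
    (hUspan : Submodule.span ℝ (Set.range fun k => Uᵀ k) =
      Submodule.span ℝ (Set.range fun j => X₀ᵀ j))
    (Δ : Matrix (Fin n) (Fin n) ℝ) (hΔsymm : Δᵀ = Δ)
    (hsmall : specNorm Δ < singVal X₀ r) :
    IsUnit (Uᵀ * (X₀ + Δ) * U) ∧
      frobNorm ((1 - U * Uᵀ) * Δ * U * (Uᵀ * (X₀ + Δ) * U)⁻¹ * Uᵀ * Δᵀ * (1 - U * Uᵀ)) ≤
        (frobNorm (Δ - (1 - U * Uᵀ) * Δ * (1 - U * Uᵀ))) ^ 2 /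
          (singVal X₀ r - specNorm Δ) :=
  stmt12_general X₀ hX₀symm hrank U hUo hUspan Δ hsmall
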